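/- Let λ > 0 and let a : ℤ → ℝ be a sequence with residual ε[k] = a[k] − M_λ(a[k]) (so ε takes values in 2λℤ). If ‖Δ^N a‖_∞ < λ, then the N-th difference of the residual can be computed from the modulo samples y = M_λ ∘ a via (Δ^N ε)[k] = M_λ((Δ^N y)[k]) − (Δ^N y)[k]. -/

import Mathlib

/-!
Since `ε = a - y` takes values in `2λℤ` and `Δ` is linear with integer coefficients, `Δ^N ε` is again
`2λℤ`-valued, so `Δ^N y = Δ^N a - Δ^N ε` differs from `Δ^N a` by a multiple of the period of `M_λ`.
Hence `M_λ (Δ^N y) = M_λ (Δ^N a) = Δ^N a`, the last step because `|Δ^N a| < λ`.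
-/

/-- Centered modulo operation. -/
noncomputable def cmod (lam f : ℝ) : ℝ :=
  2 * lam * (Int.fract (f / (2 * lam) + 1 / 2) - 1 / 2)

/-- Forward finite difference on sequences. -/
def fdiff (a : ℤ → ℝ) : ℤ → ℝ := fun k => a (k + 1) - a k

lemma fdiff_sub (f g : ℤ → ℝ) : fdiff (f - g) = fdiff f - fdiff g := by
  funext k
  simp only [fdiff, Pi.sub_apply]
  ring

lemma fdiff_iterate_sub (N : ℕ) (f g : ℤ → ℝ) :
    fdiff^[N] (f - g) = fdiff^[N] f - fdiff^[N] g := by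
  induction N with
  | zero => rfl
  | succ n ih => simp only [Function.iterate_succ_apply', ih, fdiff_sub]

lemma fdiff_iterate_mem {S : AddSubgroup ℝ} {f : ℤ → ℝ} (hf : ∀ k, f k ∈ S) (N : ℕ) (k : ℤ) :
    fdiff^[N] f k ∈ S := by
  induction N generalizing k with
  | zero => exact hf k
  | succ n ih =>
    rw [Function.iterate_succ_apply']
    exact S.sub_mem (ih (k + 1)) (ih k)

lemma cmod_periodic (lam : ℝ) : Function.Periodic (cmod lam) (2 * lam) := by
  intro x
  rcases eq_or_ne lam 0 with rfl | hlam
  · simp [cmod]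
  · have : (x + 2 * lam) / (2 * lam) + 1 / 2 = (x / (2 * lam) + 1 / 2) + 1 := by
      field_simp
      ring
    simp only [cmod, this, Int.fract_add_one]

lemma cmod_sub_of_mem_zmultiples {lam p : ℝ} (hp : p ∈ AddSubgroup.zmultiples (2 * lam)) (x : ℝ) :
    cmod lam (x - p) = cmod lam x := by
  obtain ⟨m, rfl⟩ := AddSubgroup.mem_zmultiples_iff.mp hp
  exact (cmod_periodic lam).sub_zsmul_eq m

lemma sub_cmod_mem_zmultiples {lam : ℝ} (hlam : lam ≠ 0) (x : ℝ) :
    x - cmod lam x ∈ AddSubgroup.zmultiples (2 * lam) := by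
  refine AddSubgroup.mem_zmultiples_iff.mpr ⟨⌊x / (2 * lam) + 1 / 2⌋, ?_⟩
  rw [cmod, Int.fract, zsmul_eq_mul]
  field_simp
  ring

lemma cmod_eq_self {lam x : ℝ} (hx : |x| < lam) : cmod lam x = x := by
  have hlam : 0 < lam := (abs_nonneg x).trans_lt hx
  obtain ⟨hlo, hhi⟩ := abs_lt.mp hx
  have hfract : Int.fract (x / (2 * lam) + 1 / 2) = x / (2 * lam) + 1 / 2 := by
    refine Int.fract_eq_self.mpr ⟨?_, ?_⟩
    · have : -(1 / 2 : ℝ) < x / (2 * lam) := by rw [lt_div_iff₀ (by positivity)]; linarith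
      linarith
    · have : x / (2 * lam) < 1 / 2 := by rw [div_lt_iff₀ (by positivity)]; linarith
      linarith
  rw [cmod, hfract]
  field_simp
  ring

theorem recover_residual_fdiff_general (lam : ℝ)
    (a y ε : ℤ → ℝ) (hy : ∀ k : ℤ, y k = cmod lam (a k))
    (hε : ∀ k : ℤ, ε k = a k - cmod lam (a k)) (N : ℕ)
    (hbound : ∀ k : ℤ, |fdiff^[N] a k| < lam) :
    ∀ k : ℤ, fdiff^[N] ε k = cmod lam (fdiff^[N] y k) - fdiff^[N] y k := by
  intro k
  have hlam : lam ≠ 0 := ((abs_nonneg _).trans_lt (hbound k)).ne'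
  have hdiff : fdiff^[N] ε k = fdiff^[N] a k - fdiff^[N] y k := by
    have hεay : ε = a - y := funext fun j => by rw [hε, Pi.sub_apply, hy]
    rw [hεay, fdiff_iterate_sub, Pi.sub_apply]
  have hlattice : fdiff^[N] ε k ∈ AddSubgroup.zmultiples (2 * lam) :=
    fdiff_iterate_mem (fun j => hε j ▸ sub_cmod_mem_zmultiples hlam (a j)) N k
  have hrecover : cmod lam (fdiff^[N] y k) = fdiff^[N] a k := by
    rw [show fdiff^[N] y k = fdiff^[N] a k - fdiff^[N] ε k by rw [hdiff]; ring,
      cmod_sub_of_mem_zmultiples hlattice, cmod_eq_self (hbound k)]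
  rw [hrecover, hdiff]

theorem recover_residual_fdiff (lam : ℝ) (hlam : 0 < lam)
    (a y ε : ℤ → ℝ) (hy : ∀ k : ℤ, y k = cmod lam (a k))
    (hε : ∀ k : ℤ, ε k = a k - cmod lam (a k)) (N : ℕ)
    (hbound : ∀ k : ℤ, |fdiff^[N] a k| < lam) :
    ∀ k : ℤ, fdiff^[N] ε k = cmod lam (fdiff^[N] y k) - fdiff^[N] y k :=
  recover_residual_fdiff_general lam a y ε hy hε N hbound
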